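/- Let G₁ be the 7-vertex graph with vertex set {1,2,3,4,5,6,7} and edge set {{1,2},{2,3},{3,4},{4,5},{5,6},{6,1},{7,3},{7,6}} (a 6-cycle together with a seventh vertex adjacent to the two antipodal vertices 3 and 6), and let G₂ be the graph obtained from G₁ by adding the edge {7,4}. Then both G₁ and G₂ are labellable. -/

import Mathlib

/-! Both graphs are induced subgraphs of the Johnson graph J(6, 3): label the vertices by
3-subsets of {0, …, 5}, adjacent exactly when they share two elements. For `G₂` it suffices to
move vertex 4 of the labelling of `G₁` so that its label meets that of vertex 7 in two elements. -/

/-- `H` is labellable: for some positive integer `k` the vertices of `H` can be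
injectively labelled by `k`-element subsets of `ℕ` so that two distinct vertices
are adjacent if and only if their labels intersect in a set of size `k - 1`. -/
def Labellable {V : Type*} (H : SimpleGraph V) : Prop :=
  ∃ k : ℕ, 0 < k ∧ ∃ ℓ : V → Finset ℕ, Function.Injective ℓ ∧
    (∀ v, (ℓ v).card = k) ∧
    ∀ u v : V, u ≠ v → (H.Adj u v ↔ (ℓ u ∩ ℓ v).card = k - 1)

/-- `G₁`: the 7-vertex graph with vertex set `{1,…,7}` (vertex `i` is encoded as
`i - 1 : Fin 7`) and edge set `{{1,2},{2,3},{3,4},{4,5},{5,6},{6,1},{7,3},{7,6}}`: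
a 6-cycle together with a seventh vertex adjacent to the two antipodal vertices
`3` and `6`. -/
def G₁ : SimpleGraph (Fin 7) :=
  SimpleGraph.fromRel (fun a b =>
    (a.val + 1, b.val + 1) ∈
      [(1, 2), (2, 3), (3, 4), (4, 5), (5, 6), (6, 1), (7, 3), (7, 6)])

/-- `G₂`: the graph obtained from `G₁` by adding the edge `{7,4}`. -/
def G₂ : SimpleGraph (Fin 7) :=
  SimpleGraph.fromRel (fun a b =>
    (a.val + 1, b.val + 1) ∈
      [(1, 2), (2, 3), (3, 4), (4, 5), (5, 6), (6, 1), (7, 3), (7, 6), (7, 4)])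

instance : DecidableRel G₁.Adj := fun a b =>
  decidable_of_iff _ (SimpleGraph.fromRel_adj _ a b).symm

instance : DecidableRel G₂.Adj := fun a b =>
  decidable_of_iff _ (SimpleGraph.fromRel_adj _ a b).symm

def ℓ₁ : Fin 7 → Finset ℕ :=
  ![{0, 1, 2}, {0, 1, 3}, {0, 3, 4}, {0, 4, 5}, {1, 4, 5}, {1, 2, 4}, {2, 3, 4}]

def ℓ₂ : Fin 7 → Finset ℕ := Function.update ℓ₁ 3 {3, 4, 5}

theorem labellable_G₁ : Labellable G₁ :=
  ⟨3, by norm_num, ℓ₁, by decide, by decide, by decide⟩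

theorem labellable_G₂ : Labellable G₂ :=
  ⟨3, by norm_num, ℓ₂, by decide, by decide, by decide⟩

/-- Both `G₁` and `G₂` are labellable. -/
theorem G1_and_G2_labellable : Labellable G₁ ∧ Labellable G₂ :=
  ⟨labellable_G₁, labellable_G₂⟩
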